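/- For n×n quaternion matrices M and N, define the 3n×3n block matrices A_M = [[0, I_n, M],[0, 0, I_n],[0, 0, 0]] and A_N = [[0, I_n, N],[0, 0, I_n],[0, 0, 0]] (which satisfy A_M³ = A_N³ = 0). Then A_M is unitarily similar to A_N if and only if M is unitarily similar to N. -/

import Mathlib

/-!
Write `A_M` as the `3 × 3` block matrix `[[0, 1, M], [0, 0, 1], [0, 0, 0]]` over `R = M_n(ℍ)`.
If `W A_M = A_N W`, comparing blocks shows that `W = [[V, X, Y], [0, V, Z], [0, 0, V]]` with
`V M + X = Z + N V`. When `W` is unitary, `V` is unitary and `V* X = 0 = Z V*`, so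
`M = V* N V`. Conversely `diag(U, U, U)` conjugates `A_N` to `A_M` when `M = U* N U`.
-/

open Matrix
open scoped Quaternion

noncomputable section

/-- A quaternion matrix `U` is unitary if `Uᴴ * U = 1`. -/
def IsUnitaryM {m : Type*} [Fintype m] [DecidableEq m] (U : Matrix m m ℍ[ℝ]) : Prop :=
  Uᴴ * U = 1

/-- `A` and `B` are unitarily similar if `A = Uᴴ * B * U` for some unitary `U`. -/
def UnitarilySimilar {m : Type*} [Fintype m] [DecidableEq m] (A B : Matrix m m ℍ[ℝ]) : Prop :=
  ∃ U : Matrix m m ℍ[ℝ], IsUnitaryM U ∧ A = Uᴴ * B * U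

/-- The block matrix `A_M = [[0, I, M],[0, 0, I],[0, 0, 0]]`, indexed by `Fin 3 × Fin n`. -/
def threeNil {n : ℕ} (M : Matrix (Fin n) (Fin n) ℍ[ℝ]) :
    Matrix (Fin 3 × Fin n) (Fin 3 × Fin n) ℍ[ℝ] :=
  fun x y =>
    let d : ℍ[ℝ] := if x.2 = y.2 then 1 else 0
    if x.1 = 0 ∧ y.1 = 1 then d
    else if x.1 = 0 ∧ y.1 = 2 then M x.2 y.2
    else if x.1 = 1 ∧ y.1 = 2 then d
    else 0

theorem exists_unitary_conj_map_iff {A B : Type*} [Monoid A] [StarMul A] [Monoid B] [StarMul B]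
    (e : A ≃⋆* B) (a b : A) :
    (∃ w ∈ unitary B, e a = star w * e b * w) ↔ ∃ u ∈ unitary A, a = star u * b * u := by
  constructor
  · rintro ⟨w, hw, h⟩
    refine ⟨e.symm w, Unitary.map_mem e.symm hw, EquivLike.injective e ?_⟩
    rw [h, map_mul, map_mul, map_star, StarMulEquiv.apply_symm_apply]
  · rintro ⟨u, hu, rfl⟩
    exact ⟨e u, Unitary.map_mem e hu, by rw [map_mul, map_mul, map_star]⟩

namespace Matrix

def compStarMulEquiv (I J R : Type*) [Fintype I] [Fintype J] [AddCommMonoid R] [Mul R] [Star R] :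
    Matrix I I (Matrix J J R) ≃⋆* Matrix (I × J) (I × J) R :=
  { compRingEquiv I J R with map_star' := fun _ => rfl }

variable {R : Type*}

def blockThreeNil [Zero R] [One R] (a : R) : Matrix (Fin 3) (Fin 3) R :=
  !![0, 1, a; 0, 0, 1; 0, 0, 0]

section Semiring

variable [Semiring R]

theorem blockThreeNil_pow_three (a : R) : blockThreeNil a ^ 3 = 0 := by
  ext i j
  fin_cases i <;> fin_cases j <;> simp [blockThreeNil, pow_three, mul_apply, Fin.sum_univ_three]

theorem exists_upperTriangular_of_mul_blockThreeNil_eq {a b : R} {W : Matrix (Fin 3) (Fin 3) R}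
    (h : W * blockThreeNil a = blockThreeNil b * W) :
    ∃ v x y z, W = !![v, x, y; 0, v, z; 0, 0, v] ∧ v * a + x = z + b * v := by
  have e : ∀ i j, (W * blockThreeNil a) i j = (blockThreeNil b * W) i j := by simp [h]
  have h20 : W 2 0 = 0 := by
    simpa [blockThreeNil, mul_apply, Fin.sum_univ_three] using (e 1 0).symm
  have h21 : W 2 1 = 0 := by
    simpa [blockThreeNil, mul_apply, Fin.sum_univ_three, h20] using e 2 2
  have h10 : W 1 0 = 0 := by
    simpa [blockThreeNil, mul_apply, Fin.sum_univ_three, h21] using e 1 1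
  have h11 : W 1 1 = W 0 0 := by
    simpa [blockThreeNil, mul_apply, Fin.sum_univ_three, h21] using (e 0 1).symm
  have h22 : W 2 2 = W 0 0 := by
    simpa [blockThreeNil, mul_apply, Fin.sum_univ_three, h10, h11] using (e 1 2).symm
  refine ⟨W 0 0, W 0 1, W 0 2, W 1 2, ?_, ?_⟩
  · ext i j
    fin_cases i <;> fin_cases j <;> simp [h10, h11, h20, h21, h22]
  · simpa [blockThreeNil, mul_apply, Fin.sum_univ_three, h22] using e 0 2

end Semiring

section StarRing

variable [Semiring R] [StarRing R]

theorem scalar_mem_unitary {n : Type*} [Fintype n] [DecidableEq n] {u : R}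
    (hu : u ∈ unitary R) : scalar n u ∈ unitary (Matrix n n R) := by
  rw [Unitary.mem_iff] at hu ⊢
  simp [star_eq_conjTranspose, diagonal_conjTranspose, hu.1, hu.2]

theorem star_scalar_mul_blockThreeNil_mul_scalar {u : R} (hu : star u * u = 1) (b : R) :
    star (scalar (Fin 3) u) * blockThreeNil b * scalar (Fin 3) u =
      blockThreeNil (star u * b * u) := by
  ext i j
  fin_cases i <;> fin_cases j <;> simp [blockThreeNil, star_eq_conjTranspose, hu]

theorem exists_unitary_conj_of_mul_blockThreeNil_eq {a b : R} {W : Matrix (Fin 3) (Fin 3) R}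
    (hW : W ∈ unitary (Matrix (Fin 3) (Fin 3) R))
    (h : W * blockThreeNil a = blockThreeNil b * W) :
    ∃ u ∈ unitary R, a = star u * b * u := by
  obtain ⟨v, x, y, z, rfl, hvx⟩ := exists_upperTriangular_of_mul_blockThreeNil_eq h
  obtain ⟨hWW, hWW'⟩ := Unitary.mem_iff.mp hW
  have hvv : star v * v = 1 := by
    simpa [star_eq_conjTranspose, mul_apply, Fin.sum_univ_three] using congr($hWW 0 0)
  have hvv' : v * star v = 1 := by
    simpa [star_eq_conjTranspose, mul_apply, Fin.sum_univ_three] using congr($hWW' 2 2)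
  have hx : star v * x = 0 := by
    simpa [star_eq_conjTranspose, mul_apply, Fin.sum_univ_three] using congr($hWW 0 1)
  have hzv : z * star v = 0 := by
    simpa [star_eq_conjTranspose, mul_apply, Fin.sum_univ_three] using congr($hWW' 1 2)
  have hz : z = 0 := by
    rw [← mul_one z, ← hvv, ← mul_assoc, hzv, zero_mul]
  refine ⟨v, Unitary.mem_iff.mpr ⟨hvv, hvv'⟩, ?_⟩
  calc a = star v * (v * a + x) := by rw [mul_add, ← mul_assoc, hvv, one_mul, hx, add_zero]
    _ = star v * b * v := by rw [hvx, hz, zero_add, mul_assoc]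

theorem exists_unitary_conj_blockThreeNil_iff (a b : R) :
    (∃ W ∈ unitary (Matrix (Fin 3) (Fin 3) R),
        blockThreeNil a = star W * blockThreeNil b * W) ↔
      ∃ u ∈ unitary R, a = star u * b * u := by
  constructor
  · rintro ⟨W, hW, h⟩
    refine exists_unitary_conj_of_mul_blockThreeNil_eq hW ?_
    rw [h, ← mul_assoc, ← mul_assoc, Unitary.mul_star_self_of_mem hW, one_mul]
  · rintro ⟨u, hu, rfl⟩
    exact ⟨scalar (Fin 3) u, scalar_mem_unitary hu,
      (star_scalar_mul_blockThreeNil_mul_scalar (Unitary.star_mul_self_of_mem hu) b).symm⟩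

end StarRing

end Matrix

section Quaternion

variable {m : Type*} [Fintype m] [DecidableEq m]

-- A one-sided inverse suffices since matrix rings over the division ring `ℍ` are Dedekind-finite.
theorem isUnitaryM_iff_mem_unitary (U : Matrix m m ℍ[ℝ]) :
    IsUnitaryM U ↔ U ∈ unitary (Matrix m m ℍ[ℝ]) := by
  rw [Unitary.mem_iff, IsUnitaryM, star_eq_conjTranspose, mul_eq_one_comm (a := U), and_self]

theorem unitarilySimilar_iff_exists_mem_unitary (A B : Matrix m m ℍ[ℝ]) :
    UnitarilySimilar A B ↔ ∃ U ∈ unitary (Matrix m m ℍ[ℝ]), A = star U * B * U := by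
  simp only [UnitarilySimilar, isUnitaryM_iff_mem_unitary, star_eq_conjTranspose]

end Quaternion

theorem threeNil_eq_comp {n : ℕ} (M : Matrix (Fin n) (Fin n) ℍ[ℝ]) :
    threeNil M = comp _ _ _ _ _ (blockThreeNil M) := by
  funext ⟨i, a⟩ ⟨j, b⟩
  fin_cases i <;> fin_cases j <;> rfl

theorem threeNil_pow_three {n : ℕ} (M : Matrix (Fin n) (Fin n) ℍ[ℝ]) :
    threeNil M ^ 3 = 0 := by
  rw [threeNil_eq_comp, ← compRingEquiv_apply, ← map_pow, blockThreeNil_pow_three, map_zero]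

/-- **Theorem 3.2(b), key gadget.** The matrices `A_M` satisfy `A_M³ = 0`, and `A_M`,
`A_N` are unitarily similar iff `M`, `N` are unitarily similar. -/
theorem threeNil_unitarily_similar_iff {n : ℕ} (M N : Matrix (Fin n) (Fin n) ℍ[ℝ]) :
    (threeNil M ^ 3 = 0 ∧ threeNil N ^ 3 = 0) ∧
    (UnitarilySimilar (threeNil M) (threeNil N) ↔ UnitarilySimilar M N) := by
  refine ⟨⟨threeNil_pow_three M, threeNil_pow_three N⟩, ?_⟩
  rw [unitarilySimilar_iff_exists_mem_unitary, unitarilySimilar_iff_exists_mem_unitary,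
    threeNil_eq_comp, threeNil_eq_comp]
  exact (exists_unitary_conj_map_iff (compStarMulEquiv (Fin 3) (Fin n) ℍ[ℝ]) _ _).trans
    (exists_unitary_conj_blockThreeNil_iff M N)
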